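/- Let N ≥ 2 be a real number and let t' be a real number with 0 ≤ t' ≤ N-1. Set α = (N+t'-1)(N-t')/(N(N-1)). Then (i) α·(N/2 + N·t'/(2(N+t'-1))) + (1-α)·N = (N+t')/2, and (ii) α·N(N-1)/((t'+1)(N+t'-1)) + (1-α)·0 = (N-t')/(t'+1). In particular, writing t = t'+1, memory-sharing between the Scheme B point (N/2 + N·t'/(2(N+t'-1)), N(N-1)/((t'+1)(N+t'-1))) and the trivial point (N, 0) yields the Scheme A point ((N+t-1)/2, (N-t+1)/t) for the two-user system. -/
import Mathlib

/-- memory-sharing between the Scheme B point and the trivial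
point (N,0) with coefficient α = (N+t'-1)(N-t')/(N(N-1)) yields the Scheme A
point ((N+t')/2, (N-t')/(t'+1)) for the two-user system. -/
theorem stmt_4 (N t' : ℝ) (hN : 2 ≤ N) (ht0 : 0 ≤ t') (ht1 : t' ≤ N - 1) :
    (((N + t' - 1) * (N - t')) / (N * (N - 1)))
          * (N / 2 + N * t' / (2 * (N + t' - 1)))
        + (1 - ((N + t' - 1) * (N - t')) / (N * (N - 1))) * N
      = (N + t') / 2 ∧
    (((N + t' - 1) * (N - t')) / (N * (N - 1)))
          * (N * (N - 1) / ((t' + 1) * (N + t' - 1)))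
        + (1 - ((N + t' - 1) * (N - t')) / (N * (N - 1))) * 0
      = (N - t') / (t' + 1) := by
  have h1 : N ≠ 0 := by linarith
  have h2 : N - 1 ≠ 0 := by intro h; linarith
  have h3 : N + t' - 1 ≠ 0 := by intro h; linarith
  have h4 : t' + 1 ≠ 0 := by intro h; linarith
  constructor <;> (field_simp; ring)
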